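/- arXiv:1510.08956 — 3 statements merged into one kernel-verified Lean document; each statement's English description precedes it below -/
import Mathlib

section
/- Let x⁽¹⁾,…,x⁽ⁿ⁾ and y⁽¹⁾,…,y⁽ⁿ⁾ be points in ℝ^d all contained in the Euclidean ball of radius R, with empirical measures X̂⁽ⁿ⁾ := (1/n)Σᵢ δ_{x⁽ⁱ⁾} and Ŷ⁽ⁿ⁾ := (1/n)Σⱼ δ_{y⁽ʲ⁾}. If α, β ∈ B satisfy ‖α − β‖₂ < ε, then |D(αᵀX̂⁽ⁿ⁾, αᵀŶ⁽ⁿ⁾) − D(βᵀX̂⁽ⁿ⁾, βᵀŶ⁽ⁿ⁾)| ≤ 8·ε·R². -/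
open MeasureTheory ProbabilityTheory
open scoped RealInnerProductSpace ENNReal

noncomputable section

/-- Squared 2-Wasserstein distance between Borel probability measures on ℝ. -/
def sqW2 (P Q : Measure ℝ) : ℝ :=
  sInf {r : ℝ | ∃ π : Measure (ℝ × ℝ), IsProbabilityMeasure π ∧
    π.fst = P ∧ π.snd = Q ∧ r = ∫ p : ℝ × ℝ, (p.1 - p.2) ^ 2 ∂π}

/-- 1-Wasserstein distance. -/
def W1 (P Q : Measure ℝ) : ℝ :=
  sInf {r : ℝ | ∃ π : Measure (ℝ × ℝ), IsProbabilityMeasure π ∧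
    π.fst = P ∧ π.snd = Q ∧ r = ∫ p : ℝ × ℝ, |p.1 - p.2| ∂π}

/-- Pushforward of a measure on ℝ^d under the projection x ↦ βᵀx. -/
def proj {d : ℕ} (β : EuclideanSpace ℝ (Fin d)) (μ : Measure (EuclideanSpace ℝ (Fin d))) :
    Measure ℝ := μ.map (fun x => ⟪β, x⟫)

/-- Empirical measure of a finite tuple of points. -/
def emp {α : Type*} [MeasurableSpace α] {n : ℕ} (xs : Fin n → α) : Measure α :=
  (n : ℝ≥0∞)⁻¹ • ∑ i, Measure.dirac (xs i)

/-- The feasible set B = {β : ‖β‖₂ ≤ 1, β₁ ≥ 0}. -/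
def ballB (d : ℕ) (hd : 0 < d) : Set (EuclideanSpace ℝ (Fin d)) :=
  {β | ‖β‖ ≤ 1 ∧ 0 ≤ β ⟨0, hd⟩}

/-- μ admits a continuous density supported in (and nonzero on) the Euclidean ball of radius R. -/
def HasContDensityBall {d : ℕ} (R : ℝ) (μ : Measure (EuclideanSpace ℝ (Fin d))) : Prop :=
  ∃ f : EuclideanSpace ℝ (Fin d) → ℝ, Continuous f ∧ (∀ x, 0 ≤ f x) ∧
    (∀ x, 0 < f x ↔ x ∈ Metric.ball (0 : EuclideanSpace ℝ (Fin d)) R) ∧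
    μ = volume.withDensity (fun x => ENNReal.ofReal (f x))

/-- Cumulative distribution function of a measure on ℝ. -/
def mcdf (μ : Measure ℝ) (z : ℝ) : ℝ := (μ (Set.Iic z)).toReal

/-- Quantile function. -/
def quant (μ : Measure ℝ) (p : ℝ) : ℝ := sInf {x : ℝ | p ≤ mcdf μ x}

/-- Kolmogorov distance. -/
def kolm (P Q : Measure ℝ) : ℝ := ⨆ z : ℝ, |mcdf P z - mcdf Q z|

/-- Lévy distance. -/
def levy (P Q : Measure ℝ) : ℝ :=
  sInf {ε : ℝ | 0 < ε ∧ ∀ x : ℝ, mcdf Q (x - ε) - ε ≤ mcdf P x ∧ mcdf P x ≤ mcdf Q (x + ε) + ε}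

/-- Lévy–Prokhorov distance. -/
def prokh (P Q : Measure ℝ) : ℝ :=
  sInf {ε : ℝ | 0 < ε ∧ ∀ A : Set ℝ, MeasurableSet A →
    (P A).toReal ≤ (Q (Metric.thickening ε A)).toReal + ε ∧
    (Q A).toReal ≤ (P (Metric.thickening ε A)).toReal + ε}

/-- i.i.d. samples with a given law. -/
def IIDSamples {Ω α ι : Type*} [MeasurableSpace Ω] [MeasurableSpace α]
    (P : Measure Ω) (Zs : ι → Ω → α) (law : Measure α) : Prop :=
  iIndepFun Zs P ∧
    ∀ i, Measurable (Zs i) ∧ P.map (Zs i) = law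

/-- Supremum of densities of projections of ν along directions in B. -/
def projDensitySup {d : ℕ} (hd : 0 < d) (ν : Measure (EuclideanSpace ℝ (Fin d))) : ℝ :=
  sSup {z : ℝ | ∃ α ∈ ballB d hd, ∃ y : ℝ, z = ((proj α ν).rnDeriv volume y).toReal}

/-- ℓ¹ norm of the covariance matrix of X. -/
def covL1 {Ω : Type*} [MeasurableSpace Ω] (P : Measure Ω) {d : ℕ}
    (X : Ω → EuclideanSpace ℝ (Fin d)) : ℝ :=
  ∑ i, ∑ j, |(∫ ω, X ω i * X ω j ∂P) - (∫ ω, X ω i ∂P) * (∫ ω, X ω j ∂P)|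

/-- T_a(X,Y). -/
def Ta {Ω : Type*} [MeasurableSpace Ω] (P : Measure Ω) {d : ℕ}
    (X Y : Ω → EuclideanSpace ℝ (Fin d)) (a : ℝ) : ℝ :=
  |(P {ω | ∀ i, |X ω i| ≤ a}).toReal - (P {ω | ∀ i, |Y ω i| ≤ a}).toReal|

/-!
For `μ`, `ν` supported in the ball of radius `R`, a coupling `π` of the projections `αᵀμ`, `αᵀν`
lifts to a coupling `γ` of `μ` and `ν` whose `α`-projection is `π`: glue `π` with the conditional
laws of `x` given `⟪α, x⟫` and of `y` given `⟪α, y⟫`. Projecting `γ` along `β` instead gives a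
coupling of `βᵀμ`, `βᵀν`, and pointwise
`⟪β, v⟫² - ⟪α, v⟫² = ⟪β - α, v⟫ ⟪β + α, v⟫ ≤ 2 ‖α - β‖ ‖v‖²` with `‖v‖ = ‖x - y‖ ≤ 2R` on the
support of `γ`. Hence the `β`-cost exceeds the `α`-cost by at most `8 ‖α - β‖ R²`, and the
roles of `α` and `β` are symmetric.
-/

section Gluing

variable {E F S T : Type*} [MeasurableSpace E] [MeasurableSpace F] [MeasurableSpace S]
  [MeasurableSpace T]

lemma fst_map_prodMap {f : E → S} {g : F → T} (hf : Measurable f) (hg : Measurable g)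
    (γ : Measure (E × F)) : (γ.map (Prod.map f g)).fst = γ.fst.map f := by
  rw [Measure.fst, Measure.fst, Measure.map_map measurable_fst (hf.prodMap hg),
    Measure.map_map hf measurable_fst]
  rfl

lemma snd_map_prodMap {f : E → S} {g : F → T} (hf : Measurable f) (hg : Measurable g)
    (γ : Measure (E × F)) : (γ.map (Prod.map f g)).snd = γ.snd.map g := by
  rw [Measure.snd, Measure.snd, Measure.map_map measurable_snd (hf.prodMap hg),
    Measure.map_map hg measurable_snd]
  rfl

variable [StandardBorelSpace E] [Nonempty E] [StandardBorelSpace F] [Nonempty F]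
  [MeasurableEq S] [MeasurableEq T]

lemma ae_map_condDistrib_id_eq_dirac {μ : Measure E} [IsFiniteMeasure μ] {f : E → S}
    (hf : Measurable f) :
    ∀ᵐ s ∂μ.map f, (condDistrib id f μ s).map f = Measure.dirac s := by
  have h : ∀ᵐ p ∂(μ.map f ⊗ₘ condDistrib id f μ), f p.2 = p.1 := by
    rw [compProd_map_condDistrib aemeasurable_id]
    exact (ae_map_iff (hf.prodMk measurable_id).aemeasurable
      (measurableSet_eq_fun (hf.comp measurable_snd) measurable_fst)).2 (ae_of_all _ fun _ => rfl)
  filter_upwards [Measure.ae_ae_of_ae_compProd h] with s hs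
  rw [Measure.map_congr hs, Measure.map_const, measure_univ, one_smul]

theorem exists_coupling_map_prodMap_eq {μ : Measure E} {ν : Measure F} [IsFiniteMeasure μ]
    [IsFiniteMeasure ν] {f : E → S} {g : F → T} (hf : Measurable f) (hg : Measurable g)
    {π : Measure (S × T)} (hπ₁ : π.fst = μ.map f) (hπ₂ : π.snd = ν.map g) :
    ∃ γ : Measure (E × F), γ.fst = μ ∧ γ.snd = ν ∧ γ.map (Prod.map f g) = π := by
  set κ := condDistrib id f μ
  set η := condDistrib id g ν
  have hκ : κ ∘ₘ π.fst = μ := by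
    rw [hπ₁, condDistrib_comp_map hf.aemeasurable aemeasurable_id, Measure.map_id]
  have hη : η ∘ₘ π.snd = ν := by
    rw [hπ₂, condDistrib_comp_map hg.aemeasurable aemeasurable_id, Measure.map_id]
  refine ⟨(κ ∥ₖ η) ∘ₘ π, ?_, ?_, ?_⟩
  · ext A hA
    rw [← hκ, Measure.fst_apply hA, Measure.bind_apply (measurable_fst hA) (Kernel.aemeasurable _),
      Measure.bind_apply hA (Kernel.aemeasurable _), Measure.fst,
      lintegral_map (κ.measurable_coe hA) measurable_fst]
    simp_rw [← Set.prod_univ, Kernel.parallelComp_apply_prod, measure_univ, mul_one]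
  · ext B hB
    rw [← hη, Measure.snd_apply hB, Measure.bind_apply (measurable_snd hB) (Kernel.aemeasurable _),
      Measure.bind_apply hB (Kernel.aemeasurable _), Measure.snd,
      lintegral_map (η.measurable_coe hB) measurable_snd]
    simp_rw [← Set.univ_prod, Kernel.parallelComp_apply_prod, measure_univ, one_mul]
  · have hfst : ∀ᵐ p ∂π, (κ p.1).map f = Measure.dirac p.1 :=
      ae_of_ae_map measurable_fst.aemeasurable (hπ₁ ▸ ae_map_condDistrib_id_eq_dirac hf)
    have hsnd : ∀ᵐ p ∂π, (η p.2).map g = Measure.dirac p.2 :=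
      ae_of_ae_map measurable_snd.aemeasurable (hπ₂ ▸ ae_map_condDistrib_id_eq_dirac hg)
    calc ((κ ∥ₖ η) ∘ₘ π).map (Prod.map f g) = ((κ ∥ₖ η).map (Prod.map f g)) ∘ₘ π :=
          Measure.map_comp _ _ (hf.prodMap hg)
      _ = Kernel.id ∘ₘ π := by
          refine Measure.comp_congr ?_
          filter_upwards [hfst, hsnd] with p hpf hpg
          rw [Kernel.map_apply _ (hf.prodMap hg), Kernel.parallelComp_apply, Kernel.id_apply,
            ← Measure.map_prod_map _ _ hf hg, hpf, hpg, Measure.dirac_prod_dirac]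
      _ = π := Measure.id_comp

end Gluing

lemma sqW2_le_integral {P Q : Measure ℝ} {π : Measure (ℝ × ℝ)} [IsProbabilityMeasure π]
    (hπ₁ : π.fst = P) (hπ₂ : π.snd = Q) : sqW2 P Q ≤ ∫ p, (p.1 - p.2) ^ 2 ∂π :=
  csInf_le ⟨0, by rintro r ⟨π, -, -, -, rfl⟩; exact integral_nonneg fun p => sq_nonneg _⟩
    ⟨π, ‹_›, hπ₁, hπ₂, rfl⟩

lemma le_sqW2 {P Q : Measure ℝ} [IsProbabilityMeasure P] [IsProbabilityMeasure Q] {c : ℝ}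
    (h : ∀ π : Measure (ℝ × ℝ), IsProbabilityMeasure π → π.fst = P → π.snd = Q →
      c ≤ ∫ p, (p.1 - p.2) ^ 2 ∂π) :
    c ≤ sqW2 P Q :=
  le_csInf ⟨_, P.prod Q, inferInstance, Measure.fst_prod, Measure.snd_prod, rfl⟩
    (by rintro r ⟨π, hπ, hπ₁, hπ₂, rfl⟩; exact h π hπ hπ₁ hπ₂)

lemma sq_inner_le_sq_inner_add {E : Type*} [NormedAddCommGroup E] [InnerProductSpace ℝ E]
    {α β : E} (hα : ‖α‖ ≤ 1) (hβ : ‖β‖ ≤ 1) (v : E) :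
    ⟪β, v⟫ ^ 2 ≤ ⟪α, v⟫ ^ 2 + 2 * ‖α - β‖ * ‖v‖ ^ 2 := by
  have hsub : |⟪β - α, v⟫| ≤ ‖α - β‖ * ‖v‖ := by
    rw [norm_sub_rev]; exact abs_real_inner_le_norm _ _
  have hadd : |⟪β + α, v⟫| ≤ 2 * ‖v‖ :=
    (abs_real_inner_le_norm _ _).trans
      (mul_le_mul_of_nonneg_right ((norm_add_le _ _).trans (by linarith)) (norm_nonneg _))
  calc ⟪β, v⟫ ^ 2 = ⟪α, v⟫ ^ 2 + ⟪β - α, v⟫ * ⟪β + α, v⟫ := by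
        rw [inner_sub_left, inner_add_left]; ring
    _ ≤ ⟪α, v⟫ ^ 2 + |⟪β - α, v⟫| * |⟪β + α, v⟫| := by
        rw [← abs_mul]; gcongr; exact le_abs_self _
    _ ≤ ⟪α, v⟫ ^ 2 + ‖α - β‖ * ‖v‖ * (2 * ‖v‖) := by gcongr
    _ = ⟪α, v⟫ ^ 2 + 2 * ‖α - β‖ * ‖v‖ ^ 2 := by ring

lemma integral_sq_inner_le {Ω E : Type*} [MeasurableSpace Ω] [NormedAddCommGroup E]
    [InnerProductSpace ℝ E] [MeasurableSpace E] [BorelSpace E] [SecondCountableTopology E]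
    {μ : Measure Ω} [IsProbabilityMeasure μ] {V : Ω → E} (hV : AEMeasurable V μ) {r : ℝ}
    (hVr : ∀ᵐ ω ∂μ, ‖V ω‖ ≤ r) {α β : E} (hα : ‖α‖ ≤ 1) (hβ : ‖β‖ ≤ 1) :
    ∫ ω, ⟪β, V ω⟫ ^ 2 ∂μ ≤ ∫ ω, ⟪α, V ω⟫ ^ 2 ∂μ + 2 * ‖α - β‖ * r ^ 2 := by
  have hint : ∀ {u : E}, ‖u‖ ≤ 1 → Integrable (fun ω => ⟪u, V ω⟫ ^ 2) μ := fun {u} hu =>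
    Integrable.of_bound (hV.const_inner.pow_const 2).aestronglyMeasurable (r ^ 2) <| by
      filter_upwards [hVr] with ω hω
      rw [Real.norm_eq_abs, abs_pow]
      have := (abs_real_inner_le_norm u (V ω)).trans
        ((mul_le_of_le_one_left (norm_nonneg _) hu).trans hω)
      gcongr
  calc ∫ ω, ⟪β, V ω⟫ ^ 2 ∂μ ≤ ∫ ω, (⟪α, V ω⟫ ^ 2 + 2 * ‖α - β‖ * r ^ 2) ∂μ := by
        refine integral_mono_ae (hint hβ) ((hint hα).add (integrable_const _)) ?_
        filter_upwards [hVr] with ω hω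
        have := sq_inner_le_sq_inner_add hα hβ (V ω)
        have : ‖V ω‖ ^ 2 ≤ r ^ 2 := by gcongr
        nlinarith [norm_nonneg (α - β)]
    _ = ∫ ω, ⟪α, V ω⟫ ^ 2 ∂μ + 2 * ‖α - β‖ * r ^ 2 := by
        rw [integral_add (hint hα) (integrable_const _), integral_const, probReal_univ, one_smul]

lemma isProbabilityMeasure_emp {α : Type*} [MeasurableSpace α] {n : ℕ} (hn : 0 < n)
    (xs : Fin n → α) : IsProbabilityMeasure (emp xs) := by
  constructor
  simp only [emp, Measure.smul_apply, Measure.coe_finsetSum, Finset.sum_apply, measure_univ,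
    Finset.sum_const, Finset.card_univ, Fintype.card_fin, nsmul_eq_mul, mul_one, smul_eq_mul]
  exact ENNReal.inv_mul_cancel (by exact_mod_cast hn.ne') (ENNReal.natCast_ne_top n)

lemma ae_emp_of_forall {α : Type*} [MeasurableSpace α] [MeasurableSingletonClass α] {n : ℕ}
    {xs : Fin n → α} {p : α → Prop} (h : ∀ i, p (xs i)) : ∀ᵐ z ∂emp xs, p z := by
  rw [ae_iff]
  simp [emp, Measure.dirac_apply, h]

section Projection

variable {d : ℕ}

lemma integral_sq_sub_map_inner (a : EuclideanSpace ℝ (Fin d))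
    (γ : Measure (EuclideanSpace ℝ (Fin d) × EuclideanSpace ℝ (Fin d))) :
    ∫ p, (p.1 - p.2) ^ 2 ∂γ.map (Prod.map (fun x => ⟪a, x⟫) (fun x => ⟪a, x⟫)) =
      ∫ z, ⟪a, z.1 - z.2⟫ ^ 2 ∂γ := by
  rw [integral_map (by fun_prop) (by fun_prop)]
  simp only [Prod.map_fst, Prod.map_snd, inner_sub_right]

theorem sqW2_proj_le_sqW2_proj_add {μ ν : Measure (EuclideanSpace ℝ (Fin d))}
    [IsProbabilityMeasure μ] [IsProbabilityMeasure ν] {R : ℝ} (hμ : ∀ᵐ x ∂μ, ‖x‖ ≤ R)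
    (hν : ∀ᵐ y ∂ν, ‖y‖ ≤ R) {α β : EuclideanSpace ℝ (Fin d)} (hα : ‖α‖ ≤ 1) (hβ : ‖β‖ ≤ 1) :
    sqW2 (proj β μ) (proj β ν) ≤ sqW2 (proj α μ) (proj α ν) + 8 * ‖α - β‖ * R ^ 2 := by
  have hmeas : ∀ a : EuclideanSpace ℝ (Fin d), Measurable fun x => ⟪a, x⟫ :=
    fun a => measurable_id.const_inner
  have : IsProbabilityMeasure (proj α μ) :=
    Measure.isProbabilityMeasure_map (hmeas α).aemeasurable
  have : IsProbabilityMeasure (proj α ν) :=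
    Measure.isProbabilityMeasure_map (hmeas α).aemeasurable
  rw [← sub_le_iff_le_add]
  refine le_sqW2 fun π _ hπ₁ hπ₂ => ?_
  obtain ⟨γ, hγ₁, hγ₂, hγπ⟩ := exists_coupling_map_prodMap_eq (hmeas α) (hmeas α) hπ₁ hπ₂
  have : IsProbabilityMeasure γ := ⟨by rw [← Measure.fst_univ, hγ₁, measure_univ]⟩
  have hdiff : ∀ᵐ z ∂γ, ‖z.1 - z.2‖ ≤ 2 * R := by
    filter_upwards [ae_of_ae_map measurable_fst.aemeasurable (hγ₁ ▸ hμ),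
      ae_of_ae_map measurable_snd.aemeasurable (hγ₂ ▸ hν)] with z h₁ h₂
    linarith [norm_sub_le z.1 z.2]
  set γβ := γ.map (Prod.map (fun x => ⟪β, x⟫) (fun x => ⟪β, x⟫))
  have : IsProbabilityMeasure γβ := Measure.isProbabilityMeasure_map (by fun_prop)
  have hγβ₁ : γβ.fst = proj β μ := by
    rw [fst_map_prodMap (hmeas β) (hmeas β), hγ₁]; rfl
  have hγβ₂ : γβ.snd = proj β ν := by
    rw [snd_map_prodMap (hmeas β) (hmeas β), hγ₂]; rfl
  have key := integral_sq_inner_le (by fun_prop) hdiff hα hβ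
  rw [← integral_sq_sub_map_inner, ← integral_sq_sub_map_inner, hγπ] at key
  linarith [sqW2_le_integral hγβ₁ hγβ₂]

end Projection

theorem stmt5_general {d : ℕ} (hd : 0 < d) (R : ℝ) {n : ℕ} (hn : 0 < n)
    (x y : Fin n → EuclideanSpace ℝ (Fin d))
    (hx : ∀ i, ‖x i‖ ≤ R) (hy : ∀ j, ‖y j‖ ≤ R)
    (α β : EuclideanSpace ℝ (Fin d)) (hα : α ∈ ballB d hd) (hβ : β ∈ ballB d hd)
    (ε : ℝ) (hαβ : ‖α - β‖ < ε) :
    |sqW2 (proj α (emp x)) (proj α (emp y)) - sqW2 (proj β (emp x)) (proj β (emp y))| ≤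
      8 * ε * R ^ 2 := by
  have := isProbabilityMeasure_emp hn x
  have := isProbabilityMeasure_emp hn y
  have hx' : ∀ᵐ z ∂emp x, ‖z‖ ≤ R := ae_emp_of_forall hx
  have hy' : ∀ᵐ z ∂emp y, ‖z‖ ≤ R := ae_emp_of_forall hy
  have hβ_le := sqW2_proj_le_sqW2_proj_add hx' hy' hα.1 hβ.1
  have hα_le := sqW2_proj_le_sqW2_proj_add hx' hy' hβ.1 hα.1
  have hε : 8 * ‖α - β‖ * R ^ 2 ≤ 8 * ε * R ^ 2 := by gcongr
  rw [norm_sub_rev] at hα_le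
  rw [abs_sub_le_iff]
  constructor <;> linarith

theorem stmt5 {d : ℕ} (hd : 0 < d) (R : ℝ) (hR : 0 ≤ R) {n : ℕ} (hn : 0 < n)
    (x y : Fin n → EuclideanSpace ℝ (Fin d))
    (hx : ∀ i, ‖x i‖ ≤ R) (hy : ∀ j, ‖y j‖ ≤ R)
    (α β : EuclideanSpace ℝ (Fin d)) (hα : α ∈ ballB d hd) (hβ : β ∈ ballB d hd)
    (ε : ℝ) (hαβ : ‖α - β‖ < ε) :
    |sqW2 (proj α (emp x)) (proj α (emp y)) - sqW2 (proj β (emp x)) (proj β (emp y))| ≤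
      8 * ε * R ^ 2 :=
  stmt5_general hd R hn x y hx hy α β hα hβ ε hαβ

end
end

section
/- For any Borel probability measures P and Q on ℝ with finite second moments, the squared 2-Wasserstein distance admits the quantile representation D(P,Q) = ∫₀¹ (F_P⁻¹(p) − F_Q⁻¹(p))² dp, where F_P⁻¹ and F_Q⁻¹ are the quantile functions of P and Q. -/
open MeasureTheory ProbabilityTheory
open scoped RealInnerProductSpace ENNReal

noncomputable section

/-!
Expanding the square, it suffices to show that the comonotone coupling, the law of
`(F_P⁻¹(U), F_Q⁻¹(U))` with `U` uniform on `(0, 1)`, maximises `∫ x y dπ` over all couplings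
`π` of `P` and `Q`. By Hoeffding's identity
`x y = ∫∫ (1[s < x] - 1[s < 0]) (1[t < y] - 1[t < 0]) ds dt`, for fixed marginals `∫ x y dπ`
is an increasing function of the joint tails `π((s, ∞) × (t, ∞))`, and the comonotone coupling
attains the Fréchet bound `min (P (s, ∞)) (Q (t, ∞))` for every `s, t`. Both the marginals and
the joint tails of the comonotone coupling are computed from `F⁻¹(p) ≤ x ↔ p ≤ F(x)` for
`p ∈ (0, 1)`.
-/

open Set Filter

section Quantile

variable {μ : Measure ℝ}

lemma bddBelow_le_cdf {p : ℝ} (hp : 0 < p) : BddBelow {x | p ≤ cdf μ x} := by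
  obtain ⟨x₀, hx₀⟩ := ((tendsto_cdf_atBot μ).eventually_lt_const hp).exists
  exact ⟨x₀, fun x hx => le_of_not_gt fun hlt => (hx.trans (monotone_cdf μ hlt.le)).not_gt hx₀⟩

variable [IsProbabilityMeasure μ]

lemma mcdf_eq_cdf : mcdf μ = cdf μ := by
  ext x
  rw [mcdf, cdf_eq_real, measureReal_def]

lemma quant_eq_sInf (p : ℝ) : quant μ p = sInf {x | p ≤ cdf μ x} := by
  rw [quant, mcdf_eq_cdf]

lemma le_cdf_quant {p : ℝ} (hp : p ∈ Ioo 0 1) : p ≤ cdf μ (quant μ p) := by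
  set S := {x | p ≤ cdf μ x}
  have hne : S.Nonempty := ((tendsto_cdf_atTop μ).eventually_const_le hp.2).exists
  have hbdd : BddBelow S := bddBelow_le_cdf hp.1
  have hcont : ContinuousWithinAt (cdf μ) S (sInf S) :=
    ((cdf μ).right_continuous _).mono fun x hx => csInf_le hbdd hx
  rw [quant_eq_sInf]
  simpa only [closure_Ici, mem_Ici] using
    hcont.mem_closure (t := Ici p) (csInf_mem_closure hne hbdd) fun x hx => hx

lemma quant_le_iff {p x : ℝ} (hp : p ∈ Ioo 0 1) : quant μ p ≤ x ↔ p ≤ cdf μ x :=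
  ⟨fun h => (le_cdf_quant hp).trans (monotone_cdf μ h),
    fun h => (quant_eq_sInf p).trans_le (csInf_le (bddBelow_le_cdf hp.1) h)⟩

lemma lt_quant_iff {p x : ℝ} (hp : p ∈ Ioo 0 1) : x < quant μ p ↔ cdf μ x < p := by
  simpa only [not_le] using (quant_le_iff hp).not

lemma measureReal_Ioi_eq_one_sub_cdf (x : ℝ) : μ.real (Ioi x) = 1 - cdf μ x := by
  rw [← compl_Iic, probReal_compl_eq_one_sub measurableSet_Iic, cdf_eq_real]

lemma monotoneOn_quant : MonotoneOn (quant μ) (Ioo 0 1) := fun _ hp _ hq hpq =>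
  (quant_le_iff hp).2 (hpq.trans (le_cdf_quant hq))

lemma aemeasurable_quant : AEMeasurable (quant μ) (volume.restrict (Ioo 0 1)) :=
  aemeasurable_restrict_of_monotoneOn measurableSet_Ioo monotoneOn_quant

lemma map_quant : (volume.restrict (Ioo 0 1)).map (quant μ) = μ := by
  refine Measure.ext_of_Iic _ _ fun x => ?_
  have hpre : quant μ ⁻¹' Iic x ∩ Ioo 0 1 = Iic (cdf μ x) ∩ Ioo 0 1 := by
    ext p
    exact and_congr_left fun hp => quant_le_iff hp
  rw [Measure.map_apply_of_aemeasurable aemeasurable_quant measurableSet_Iic,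
    Measure.restrict_apply' measurableSet_Ioo, hpre, ← Measure.restrict_apply' measurableSet_Ioo,
    Measure.restrict_congr_set Ioo_ae_eq_Ioc, Measure.restrict_apply' measurableSet_Ioc,
    Iic_inter_Ioc_of_le (cdf_le_one μ x), Real.volume_Ioc, sub_zero, ofReal_cdf]

end Quantile

def comonotoneCoupling (P Q : Measure ℝ) : Measure (ℝ × ℝ) :=
  (volume.restrict (Ioo 0 1)).map fun p => (quant P p, quant Q p)

section ComonotoneCoupling

variable {P Q : Measure ℝ} [IsProbabilityMeasure P] [IsProbabilityMeasure Q]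

lemma comonotoneCoupling_fst : (comonotoneCoupling P Q).fst = P := by
  rw [comonotoneCoupling, Measure.fst_map_prodMk₀ aemeasurable_quant, map_quant]

lemma comonotoneCoupling_snd : (comonotoneCoupling P Q).snd = Q := by
  rw [comonotoneCoupling, Measure.snd_map_prodMk₀ aemeasurable_quant, map_quant]

instance : IsProbabilityMeasure (comonotoneCoupling P Q) :=
  ⟨by rw [← Measure.fst_univ, comonotoneCoupling_fst, measure_univ]⟩

lemma integral_comonotoneCoupling {f : ℝ × ℝ → ℝ} (hf : Measurable f) :
    ∫ z, f z ∂comonotoneCoupling P Q = ∫ p in Ioo 0 1, f (quant P p, quant Q p) :=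
  integral_map (aemeasurable_quant.prodMk aemeasurable_quant) hf.aestronglyMeasurable

lemma comonotoneCoupling_Ioi_prod_Ioi (s t : ℝ) :
    (comonotoneCoupling P Q).real (Ioi s ×ˢ Ioi t) = min (P.real (Ioi s)) (Q.real (Ioi t)) := by
  have hpre : (fun p => (quant P p, quant Q p)) ⁻¹' (Ioi s ×ˢ Ioi t) ∩ Ioo 0 1 =
      Ioo (max (cdf P s) (cdf Q t)) 1 := by
    rw [← max_eq_left (le_max_of_le_left (cdf_nonneg P s)), ← Ioi_inter_Ioo]
    ext p
    simp only [mem_inter_iff, mem_preimage, mem_prod, mem_Ioi, max_lt_iff]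
    exact and_congr_left fun hp => and_congr (lt_quant_iff hp) (lt_quant_iff hp)
  rw [measureReal_def, comonotoneCoupling,
    Measure.map_apply_of_aemeasurable (aemeasurable_quant.prodMk aemeasurable_quant)
      (measurableSet_Ioi.prod measurableSet_Ioi),
    Measure.restrict_apply' measurableSet_Ioo, hpre, ← measureReal_def,
    Real.volume_real_Ioo_of_le (max_le (cdf_le_one P s) (cdf_le_one Q t)),
    measureReal_Ioi_eq_one_sub_cdf, measureReal_Ioi_eq_one_sub_cdf, min_sub_sub_left]

end ComonotoneCoupling

def signedLayer (x s : ℝ) : ℝ := (if s < x then 1 else 0) - (if s < 0 then 1 else 0)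

section Hoeffding

lemma signedLayer_eq (x s : ℝ) :
    signedLayer x s = (Ico 0 x).indicator 1 s - (Ico x 0).indicator 1 s := by
  simp only [signedLayer, indicator_apply, mem_Ico, Pi.one_apply]
  split_ifs <;> grind

lemma abs_signedLayer (x s : ℝ) :
    |signedLayer x s| = (Ico 0 x).indicator 1 s + (Ico x 0).indicator 1 s := by
  simp only [signedLayer, indicator_apply, mem_Ico, Pi.one_apply]
  split_ifs <;> grind

lemma measurable_signedLayer : Measurable fun q : ℝ × ℝ => signedLayer q.1 q.2 := by
  unfold signedLayer
  refine Measurable.sub ?_ ?_ <;> refine Measurable.ite ?_ measurable_const measurable_const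
  · exact measurableSet_lt measurable_snd measurable_fst
  · exact measurableSet_lt measurable_snd measurable_const

lemma integrable_indicator_Ico_one (a b : ℝ) : Integrable ((Ico a b).indicator (1 : ℝ → ℝ)) :=
  (integrable_indicator_iff measurableSet_Ico).2 <|
    integrableOn_const (by simp [Real.volume_Ico])

lemma integrable_signedLayer (x : ℝ) : Integrable (signedLayer x) :=
  ((integrable_indicator_Ico_one 0 x).sub (integrable_indicator_Ico_one x 0)).congr
    (Eventually.of_forall fun s => (signedLayer_eq x s).symm)

lemma integral_signedLayer (x : ℝ) : ∫ s, signedLayer x s = x := by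
  simp_rw [signedLayer_eq]
  rw [integral_sub (integrable_indicator_Ico_one 0 x)
    (integrable_indicator_Ico_one x 0), integral_indicator_one measurableSet_Ico,
    integral_indicator_one measurableSet_Ico, Real.volume_real_Ico, Real.volume_real_Ico]
  simp

lemma integral_abs_signedLayer (x : ℝ) : ∫ s, |signedLayer x s| = |x| := by
  simp_rw [abs_signedLayer]
  rw [integral_add (integrable_indicator_Ico_one 0 x)
    (integrable_indicator_Ico_one x 0), integral_indicator_one measurableSet_Ico,
    integral_indicator_one measurableSet_Ico, Real.volume_real_Ico, Real.volume_real_Ico]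
  simp

variable {π : Measure (ℝ × ℝ)}

lemma integrable_signedLayer_mul_signedLayer [SFinite π]
    (h : Integrable (fun z : ℝ × ℝ => z.1 * z.2) π) :
    Integrable (fun q : (ℝ × ℝ) × (ℝ × ℝ) => signedLayer q.1.1 q.2.1 * signedLayer q.1.2 q.2.2)
      (π.prod volume) := by
  have hmeas : Measurable fun q : (ℝ × ℝ) × (ℝ × ℝ) =>
      signedLayer q.1.1 q.2.1 * signedLayer q.1.2 q.2.2 := by
    have := measurable_signedLayer
    fun_prop
  refine (integrable_prod_iff hmeas.aestronglyMeasurable).2 ⟨?_, ?_⟩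
  · refine Eventually.of_forall fun z => ?_
    rw [Measure.volume_eq_prod]
    exact (integrable_signedLayer z.1).mul_prod (integrable_signedLayer z.2)
  · refine h.abs.congr (Eventually.of_forall fun z : ℝ × ℝ => ?_)
    simp only [Measure.volume_eq_prod, norm_mul, Real.norm_eq_abs]
    rw [integral_prod_mul (fun s => |signedLayer z.1 s|) (fun t => |signedLayer z.2 t|),
      integral_abs_signedLayer, integral_abs_signedLayer, abs_mul]

lemma integral_mul_eq_integral_signedLayer [SFinite π]
    (h : Integrable (fun z : ℝ × ℝ => z.1 * z.2) π) :
    ∫ z, z.1 * z.2 ∂π = ∫ w : ℝ × ℝ, ∫ z, signedLayer z.1 w.1 * signedLayer z.2 w.2 ∂π := by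
  calc ∫ z, z.1 * z.2 ∂π
      = ∫ z : ℝ × ℝ, (∫ w : ℝ × ℝ, signedLayer z.1 w.1 * signedLayer z.2 w.2) ∂π := by
        refine integral_congr_ae (Eventually.of_forall fun z : ℝ × ℝ => ?_)
        dsimp only
        rw [Measure.volume_eq_prod, integral_prod_mul, integral_signedLayer, integral_signedLayer]
    _ = _ := integral_integral_swap (integrable_signedLayer_mul_signedLayer h)

lemma integral_signedLayer_mul_signedLayer [IsProbabilityMeasure π] (s t : ℝ) :
    ∫ z, signedLayer z.1 s * signedLayer z.2 t ∂π =
      π.real (Ioi s ×ˢ Ioi t) - (if t < 0 then 1 else 0) * π.fst.real (Ioi s)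
        - (if s < 0 then 1 else 0) * π.snd.real (Ioi t)
        + (if s < 0 then 1 else 0) * (if t < 0 then 1 else 0) := by
  set a : ℝ := if s < 0 then 1 else 0
  set b : ℝ := if t < 0 then 1 else 0
  have hexpand : (fun z : ℝ × ℝ => signedLayer z.1 s * signedLayer z.2 t) = fun z =>
      (Ioi s ×ˢ Ioi t).indicator 1 z - b * (Ioi s ×ˢ univ).indicator 1 z
        - a * (univ ×ˢ Ioi t).indicator 1 z + a * b := by
    ext z
    simp only [signedLayer, indicator_apply, mem_prod, mem_Ioi, mem_univ, Pi.one_apply, a, b]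
    split_ifs <;> grind
  have hI : ∀ S : Set (ℝ × ℝ), MeasurableSet S → Integrable (S.indicator 1) π :=
    fun S hS => (integrable_const (1 : ℝ)).indicator hS
  have hst : MeasurableSet (Ioi s ×ˢ Ioi t) := measurableSet_Ioi.prod measurableSet_Ioi
  have hs : MeasurableSet (Ioi s ×ˢ (univ : Set ℝ)) := measurableSet_Ioi.prod .univ
  have ht : MeasurableSet ((univ : Set ℝ) ×ˢ Ioi t) := MeasurableSet.univ.prod measurableSet_Ioi
  have hA := hI _ hst
  have hB := (hI _ hs).const_mul b
  have hC := (hI _ ht).const_mul a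
  rw [hexpand, integral_add ?_ (integrable_const _), integral_sub ?_ hC,
    integral_sub hA hB, integral_const_mul, integral_const_mul, integral_indicator_one hst,
    integral_indicator_one hs, integral_indicator_one ht, integral_const,
    probReal_univ, one_smul, prod_univ, univ_prod]
  · simp only [measureReal_def, Measure.fst_apply measurableSet_Ioi,
      Measure.snd_apply measurableSet_Ioi]
  exacts [hA.sub hB, (hA.sub hB).sub hC]

end Hoeffding

lemma measureReal_prod_le_min {α β : Type*} [MeasurableSpace α] [MeasurableSpace β]
    {ρ : Measure (α × β)} [IsFiniteMeasure ρ] {A : Set α} {B : Set β} (hA : MeasurableSet A)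
    (hB : MeasurableSet B) : ρ.real (A ×ˢ B) ≤ min (ρ.fst.real A) (ρ.snd.real B) := by
  simp only [measureReal_def, Measure.fst_apply hA, Measure.snd_apply hB]
  exact le_min
    (ENNReal.toReal_mono (measure_ne_top _ _) (measure_mono (prod_subset_preimage_fst A B)))
    (ENNReal.toReal_mono (measure_ne_top _ _) (measure_mono (prod_subset_preimage_snd A B)))

section Optimality

variable {π : Measure (ℝ × ℝ)}

lemma integrable_fst_mul_snd (h₁ : Integrable (fun x => x ^ 2) π.fst)
    (h₂ : Integrable (fun y => y ^ 2) π.snd) : Integrable (fun z : ℝ × ℝ => z.1 * z.2) π := by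
  have hfst : MemLp Prod.fst 2 π := (memLp_two_iff_integrable_sq
    measurable_fst.aestronglyMeasurable).2 (h₁.comp_measurable measurable_fst)
  have hsnd : MemLp Prod.snd 2 π := (memLp_two_iff_integrable_sq
    measurable_snd.aestronglyMeasurable).2 (h₂.comp_measurable measurable_snd)
  exact hfst.integrable_mul hsnd

lemma integral_sub_sq_eq (h₁ : Integrable (fun x => x ^ 2) π.fst)
    (h₂ : Integrable (fun y => y ^ 2) π.snd) :
    ∫ z, (z.1 - z.2) ^ 2 ∂π = ∫ x, x ^ 2 ∂π.fst + ∫ y, y ^ 2 ∂π.snd - 2 * ∫ z, z.1 * z.2 ∂π := by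
  have h₁' : Integrable (fun z : ℝ × ℝ => z.1 ^ 2) π := h₁.comp_measurable measurable_fst
  have h₂' : Integrable (fun z : ℝ × ℝ => z.2 ^ 2) π := h₂.comp_measurable measurable_snd
  have h₁₂ := integrable_fst_mul_snd h₁ h₂
  rw [Measure.fst, Measure.snd, integral_map measurable_fst.aemeasurable (by fun_prop),
    integral_map measurable_snd.aemeasurable (by fun_prop), ← integral_const_mul,
    ← integral_add h₁' h₂', ← integral_sub ?_ (h₁₂.const_mul 2)]
  · congr 1
    ext z
    ring
  · exact h₁'.add h₂'

lemma integral_mul_le_comonotoneCoupling [IsProbabilityMeasure π]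
    (h₁ : Integrable (fun x => x ^ 2) π.fst) (h₂ : Integrable (fun y => y ^ 2) π.snd) :
    ∫ z, z.1 * z.2 ∂π ≤ ∫ z, z.1 * z.2 ∂comonotoneCoupling π.fst π.snd := by
  have hπ := integrable_fst_mul_snd h₁ h₂
  have hc := integrable_fst_mul_snd (π := comonotoneCoupling π.fst π.snd)
    (by rwa [comonotoneCoupling_fst]) (by rwa [comonotoneCoupling_snd])
  rw [integral_mul_eq_integral_signedLayer hπ, integral_mul_eq_integral_signedLayer hc]
  refine integral_mono (integrable_signedLayer_mul_signedLayer hπ).integral_prod_right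
    (integrable_signedLayer_mul_signedLayer hc).integral_prod_right fun w => ?_
  rw [integral_signedLayer_mul_signedLayer, integral_signedLayer_mul_signedLayer,
    comonotoneCoupling_fst, comonotoneCoupling_snd, comonotoneCoupling_Ioi_prod_Ioi]
  linarith [measureReal_prod_le_min (ρ := π) (measurableSet_Ioi (a := w.1))
    (measurableSet_Ioi (a := w.2))]

lemma integral_comonotoneCoupling_sub_sq_le [IsProbabilityMeasure π]
    (h₁ : Integrable (fun x => x ^ 2) π.fst) (h₂ : Integrable (fun y => y ^ 2) π.snd) :
    ∫ z, (z.1 - z.2) ^ 2 ∂comonotoneCoupling π.fst π.snd ≤ ∫ z, (z.1 - z.2) ^ 2 ∂π := by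
  rw [integral_sub_sq_eq h₁ h₂, integral_sub_sq_eq (by rwa [comonotoneCoupling_fst])
    (by rwa [comonotoneCoupling_snd]), comonotoneCoupling_fst, comonotoneCoupling_snd]
  linarith [integral_mul_le_comonotoneCoupling h₁ h₂]

end Optimality

theorem stmt6 (P Q : Measure ℝ) [IsProbabilityMeasure P] [IsProbabilityMeasure Q]
    (hP : Integrable (fun x => x ^ 2) P) (hQ : Integrable (fun x => x ^ 2) Q) :
    sqW2 P Q = ∫ p in Set.Ioo (0 : ℝ) 1, (quant P p - quant Q p) ^ 2 := by
  have hcost : Measurable fun z : ℝ × ℝ => (z.1 - z.2) ^ 2 := by fun_prop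
  rw [sqW2, ← integral_comonotoneCoupling hcost]
  refine IsLeast.csInf_eq
    ⟨⟨_, inferInstance, comonotoneCoupling_fst, comonotoneCoupling_snd, rfl⟩, ?_⟩
  rintro _ ⟨π, _, rfl, rfl, rfl⟩
  exact integral_comonotoneCoupling_sub_sq_le hP hQ

end
end

section
/- There exists a universal constant C > 0 such that the following holds. Let X and Y be random vectors in ℝ^d with E[X] = E[Y] = 0, Var(X_ℓ) = 1 for each coordinate ℓ, and Y having sub-Gaussian tails (cdf satisfying 1 − F_Y(y) ≤ (C/y)·exp(−y²/2)). Let Φ := sup over α ∈ B of the supremum of the density of αᵀY, ψ := ‖Cov(X)‖₁, g(Δ) := Δ⁴·(1+Φ)⁻⁴, and for a ≥ 0 set h(g(Δ)) := min{(a+d)^d·(g(Δ)+d) + exp(−a²/2) + ψ·exp(−1/(√2·ψ)), (g(Δ)+exp(−a²/2))·d}. If there exists a ≥ 0 such that T_a(X,Y) > h(g(Δ)), then there exists β ∈ B such that the Kolmogorov distance between the projections exceeds g(C·Δ): sup_{z∈ℝ} |Pr(βᵀX ≤ z) − Pr(βᵀY ≤ z)| > g(C·Δ). -/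
open MeasureTheory ProbabilityTheory
open scoped RealInnerProductSpace ENNReal

noncomputable section

/-!
Suppose every projection along `β ∈ B` has Kolmogorov distance at most `ε` between `X` and `Y`.
The vectors `eᵢ`, and `-eᵢ` for `i ≠ 1`, lie in `B`; hence the coordinate laws are `ε`-close
and every coordinate tail of `Y`, except the lower tail of the first coordinate, is bounded by
the Gaussian tail `τ`. The cube `{|Z_ℓ| ≤ a ∀ ℓ}` is the slab `{|Z₁| ≤ a}`, whose probabilities
differ by at most `2ε`, minus the event that another coordinate exceeds `a`, so
`T_a ≤ 2ε + (d - 1)(2τ + 2ε)`. With `ε = g(Δ/2) = g(Δ)/16` and `τ ≤ e^{-a²/2}/2` for `a ≥ 1`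
this is at most `(g(Δ) + e^{-a²/2}) d`; for `a < 1` and `d ≥ 2` already `e^{-a²/2} d ≥ 1 ≥ T_a`.
The first entry of the minimum always exceeds `1`.
-/

open Filter Set
open scoped Topology

section RealRandomVariables

variable {Ω : Type*} [MeasurableSpace Ω] {μ : Measure Ω}

lemma abs_probReal_sub_le_one [IsProbabilityMeasure μ] (s t : Set Ω) :
    |μ.real s - μ.real t| ≤ 1 := by
  rw [abs_sub_le_iff]
  constructor <;> linarith [measureReal_le_one (μ := μ) (s := s),
    measureReal_le_one (μ := μ) (s := t), measureReal_nonneg (μ := μ) (s := s),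
    measureReal_nonneg (μ := μ) (s := t)]

lemma probReal_lt_eq_one_sub [IsProbabilityMeasure μ] {f : Ω → ℝ} (hf : Measurable f) (z : ℝ) :
    μ.real {ω | z < f ω} = 1 - μ.real {ω | f ω ≤ z} := by
  simpa only [compl_ofPred, not_le] using
    probReal_compl_eq_one_sub (μ := μ) (measurableSet_le hf measurable_const)

lemma measureReal_lt_le_of_forall_le [IsFiniteMeasure μ] {f g : Ω → ℝ} {ε : ℝ}
    (h : ∀ z, μ.real {ω | f ω ≤ z} ≤ μ.real {ω | g ω ≤ z} + ε) (c : ℝ) :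
    μ.real {ω | f ω < c} ≤ μ.real {ω | g ω < c} + ε := by
  obtain ⟨u, hu_mono, hu_lt, hu_lim⟩ := exists_seq_strictMono_tendsto c
  have hunion : ⋃ n, {ω | f ω ≤ u n} = {ω | f ω < c} := by
    ext ω
    simp only [mem_iUnion, mem_ofPred_eq]
    refine ⟨fun ⟨n, hn⟩ => hn.trans_lt (hu_lt n), fun hω => ?_⟩
    exact (hu_lim.eventually (lt_mem_nhds hω)).exists.imp fun _ => le_of_lt
  have hlim : Tendsto (fun n => μ.real {ω | f ω ≤ u n}) atTop (𝓝 (μ.real {ω | f ω < c})) := by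
    rw [← hunion]
    exact (ENNReal.tendsto_toReal (measure_ne_top μ _)).comp
      (tendsto_measure_iUnion_atTop fun m n hmn ω hω => hω.trans (hu_mono.monotone hmn))
  refine le_of_tendsto hlim (Eventually.of_forall fun n => (h (u n)).trans ?_)
  gcongr ?_ + ε
  exact measureReal_mono (μ := μ) fun ω (hω : g ω ≤ u n) => hω.trans_lt (hu_lt n)

lemma abs_measureReal_abs_le_sub_le [IsProbabilityMeasure μ] {f g : Ω → ℝ}
    (hf : Measurable f) (hg : Measurable g) {ε : ℝ}
    (h : ∀ z, |μ.real {ω | f ω ≤ z} - μ.real {ω | g ω ≤ z}| ≤ ε) {a : ℝ} (ha : 0 ≤ a) :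
    |μ.real {ω | |f ω| ≤ a} - μ.real {ω | |g ω| ≤ a}| ≤ 2 * ε := by
  have hsplit : ∀ f : Ω → ℝ, Measurable f →
      μ.real {ω | f ω ≤ a} = μ.real {ω | |f ω| ≤ a} + μ.real {ω | f ω < -a} := by
    intro f hf
    rw [← measureReal_union _ (measurableSet_lt hf measurable_const)]
    · congr 1
      ext ω
      simp only [mem_ofPred_eq, mem_union, abs_le]
      constructor
      · intro h
        by_cases hlt : f ω < -a
        · exact Or.inr hlt
        · exact Or.inl ⟨not_lt.1 hlt, h⟩
      · rintro (h | h)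
        · exact h.2
        · linarith
    · exact disjoint_left.2 fun ω (h₁ : |f ω| ≤ a) (h₂ : f ω < -a) => (abs_le.1 h₁).1.not_gt h₂
  have hfg := measureReal_lt_le_of_forall_le (μ := μ) (f := f) (g := g) (ε := ε)
    (fun z => by linarith [(abs_le.1 (h z)).2]) (-a)
  have hgf := measureReal_lt_le_of_forall_le (μ := μ) (f := g) (g := f) (ε := ε)
    (fun z => by linarith [(abs_le.1 (h z)).1]) (-a)
  have ha' := abs_le.1 (h a)
  rw [hsplit f hf, hsplit g hg] at ha'
  rw [abs_le]
  constructor <;> linarith [ha'.1, ha'.2]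

lemma measureReal_lt_abs_le [IsFiniteMeasure μ] (f : Ω → ℝ) (a : ℝ) :
    μ.real {ω | a < |f ω|} ≤ μ.real {ω | a < f ω} + μ.real {ω | a < -f ω} := by
  refine (measureReal_mono (μ := μ) fun ω (hω : a < |f ω|) => ?_).trans (measureReal_union_le _ _)
  exact lt_abs.1 hω

lemma measureReal_abs_le_sub_sum_le [IsFiniteMeasure μ] {ι : Type*} [Fintype ι] [DecidableEq ι]
    (Z : ι → Ω → ℝ) (i₀ : ι) (a : ℝ) :
    μ.real {ω | |Z i₀ ω| ≤ a} - ∑ i ∈ Finset.univ.erase i₀, μ.real {ω | a < |Z i ω|} ≤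
      μ.real {ω | ∀ i, |Z i ω| ≤ a} := by
  have hcover : {ω | |Z i₀ ω| ≤ a} ⊆
      {ω | ∀ i, |Z i ω| ≤ a} ∪ ⋃ i ∈ Finset.univ.erase i₀, {ω | a < |Z i ω|} := by
    intro ω hω
    by_cases hall : ∀ i, |Z i ω| ≤ a
    · exact Or.inl hall
    · obtain ⟨i, hi⟩ := not_forall.1 hall
      refine Or.inr (mem_biUnion (Finset.mem_erase.2 ⟨?_, Finset.mem_univ i⟩) (not_le.1 hi))
      rintro rfl
      exact hi hω
  have := (measureReal_mono (μ := μ) hcover).trans ((measureReal_union_le _ _).trans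
    (add_le_add_right (measureReal_biUnion_finset_le _ _) _))
  linarith

end RealRandomVariables

section Projections

variable {d : ℕ}

lemma single_mem_ballB (hd : 0 < d) (i : Fin d) :
    EuclideanSpace.single i (1 : ℝ) ∈ ballB d hd := by
  refine ⟨by simp, ?_⟩
  rw [PiLp.single_apply]
  split_ifs <;> norm_num

lemma neg_single_mem_ballB (hd : 0 < d) {i : Fin d} (hi : i ≠ ⟨0, hd⟩) :
    -EuclideanSpace.single i (1 : ℝ) ∈ ballB d hd :=
  ⟨by simp, by simp [Ne.symm hi]⟩

variable {Ω : Type*} [MeasurableSpace Ω] {P : Measure Ω}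

lemma mcdf_proj_map {Y : Ω → EuclideanSpace ℝ (Fin d)} (hY : Measurable Y)
    (β : EuclideanSpace ℝ (Fin d)) (z : ℝ) :
    mcdf (proj β (P.map Y)) z = P.real {ω | ⟪β, Y ω⟫ ≤ z} := by
  have hβ : Measurable fun x : EuclideanSpace ℝ (Fin d) => ⟪β, x⟫ :=
    measurable_const.inner measurable_id
  rw [mcdf, proj, Measure.map_map hβ hY, Measure.map_apply (hβ.comp hY) measurableSet_Iic]
  rfl

lemma measureReal_lt_abs_coord_le [IsFiniteMeasure P] (hd : 0 < d)
    {Z : Ω → EuclideanSpace ℝ (Fin d)} {a t : ℝ}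
    (h : ∀ β ∈ ballB d hd, P.real {ω | a < ⟪β, Z ω⟫} ≤ t) {i : Fin d} (hi : i ≠ ⟨0, hd⟩) :
    P.real {ω | a < |Z ω i|} ≤ 2 * t := by
  have hpos := h _ (single_mem_ballB hd i)
  have hneg := h _ (neg_single_mem_ballB hd hi)
  simp only [EuclideanSpace.inner_single_left, inner_neg_left, map_one, one_mul] at hpos hneg
  linarith [measureReal_lt_abs_le (μ := P) (fun ω => Z ω i) a]

lemma sum_measureReal_lt_abs_coord_le [IsFiniteMeasure P] (hd : 0 < d)
    {Z : Ω → EuclideanSpace ℝ (Fin d)} {a t : ℝ}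
    (h : ∀ β ∈ ballB d hd, P.real {ω | a < ⟪β, Z ω⟫} ≤ t) :
    ∑ i ∈ Finset.univ.erase ⟨0, hd⟩, P.real {ω | a < |Z ω i|} ≤ (d - 1) * (2 * t) := by
  calc ∑ i ∈ Finset.univ.erase ⟨0, hd⟩, P.real {ω | a < |Z ω i|}
      ≤ ∑ _i ∈ Finset.univ.erase (⟨0, hd⟩ : Fin d), 2 * t :=
        Finset.sum_le_sum fun i hi => measureReal_lt_abs_coord_le hd h (Finset.ne_of_mem_erase hi)
    _ = (d - 1) * (2 * t) := by
        rw [Finset.sum_const, Finset.card_erase_of_mem (Finset.mem_univ _), Finset.card_univ,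
          Fintype.card_fin, nsmul_eq_mul, Nat.cast_sub hd, Nat.cast_one]

lemma Ta_le_of_projections_close [IsProbabilityMeasure P] (hd : 0 < d)
    {X Y : Ω → EuclideanSpace ℝ (Fin d)} (hX : Measurable X) (hY : Measurable Y) {ε : ℝ}
    (hclose : ∀ β ∈ ballB d hd, ∀ z,
      |P.real {ω | ⟪β, X ω⟫ ≤ z} - P.real {ω | ⟪β, Y ω⟫ ≤ z}| ≤ ε)
    {a τ : ℝ} (ha : 0 ≤ a) (htail : ∀ β ∈ ballB d hd, P.real {ω | a < ⟪β, Y ω⟫} ≤ τ) :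
    Ta P X Y a ≤ 2 * ε + (d - 1) * (2 * τ + 2 * ε) := by
  set i₀ : Fin d := ⟨0, hd⟩
  have hε : 0 ≤ ε := (abs_nonneg _).trans (hclose _ (single_mem_ballB hd i₀) 0)
  have hXtail : ∀ β ∈ ballB d hd, P.real {ω | a < ⟪β, X ω⟫} ≤ τ + ε := fun β hβ => by
    rw [probReal_lt_eq_one_sub (f := fun ω => ⟪β, X ω⟫) (measurable_const.inner hX)]
    linarith [htail β hβ, (abs_le.1 (hclose β hβ a)).1,
      probReal_lt_eq_one_sub (μ := P) (f := fun ω => ⟪β, Y ω⟫) (measurable_const.inner hY) a]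
  have hcoord₀ := abs_measureReal_abs_le_sub_le (f := fun ω => X ω i₀) (g := fun ω => Y ω i₀)
    ((EuclideanSpace.proj i₀).continuous.measurable.comp hX)
    ((EuclideanSpace.proj i₀).continuous.measurable.comp hY)
    (fun z => by
      simpa [EuclideanSpace.inner_single_left] using hclose _ (single_mem_ballB hd i₀) z) ha
  have hrectX := measureReal_abs_le_sub_sum_le (μ := P) (fun i ω => X ω i) i₀ a
  have hrectY := measureReal_abs_le_sub_sum_le (μ := P) (fun i ω => Y ω i) i₀ a
  have hsubX : P.real {ω | ∀ i, |X ω i| ≤ a} ≤ P.real {ω | |X ω i₀| ≤ a} :=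
    measureReal_mono fun ω hω => hω i₀
  have hsubY : P.real {ω | ∀ i, |Y ω i| ≤ a} ≤ P.real {ω | |Y ω i₀| ≤ a} :=
    measureReal_mono fun ω hω => hω i₀
  have hsX := sum_measureReal_lt_abs_coord_le hd hXtail
  have hsY := sum_measureReal_lt_abs_coord_le hd htail
  have hd₁ : (0 : ℝ) ≤ d - 1 := by
    rw [sub_nonneg]
    exact_mod_cast hd
  have hεd : 0 ≤ (d - 1) * (2 * ε) := mul_nonneg hd₁ (by linarith)
  show |P.real _ - P.real _| ≤ _
  rw [abs_le] at hcoord₀ ⊢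
  constructor <;> nlinarith [hcoord₀.1, hcoord₀.2]

end Projections

lemma covL1_nonneg {Ω : Type*} [MeasurableSpace Ω] (P : Measure Ω) {d : ℕ}
    (X : Ω → EuclideanSpace ℝ (Fin d)) : 0 ≤ covL1 P X :=
  Finset.sum_nonneg fun _ _ => Finset.sum_nonneg fun _ _ => abs_nonneg _

theorem stmt16 :
    ∃ C : ℝ, 0 < C ∧
    ∀ (Ω : Type) (_ : MeasurableSpace Ω) (P : Measure Ω) (_ : IsProbabilityMeasure P)
      {d : ℕ} (hd : 0 < d)
      (X Y : Ω → EuclideanSpace ℝ (Fin d)) (_ : Measurable X) (_ : Measurable Y)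
      (_ : ∀ ℓ : Fin d, ∫ ω, X ω ℓ ∂P = 0) (_ : ∀ ℓ : Fin d, ∫ ω, Y ω ℓ ∂P = 0)
      (_ : ∀ ℓ : Fin d, ∫ ω, (X ω ℓ) ^ 2 ∂P = 1)
      (_ : ∀ α ∈ ballB d hd, ∀ y : ℝ, 0 < y →
        1 - mcdf (proj α (P.map Y)) y ≤ C / y * Real.exp (-y ^ 2 / 2))
      (Δ : ℝ),
      (∃ a : ℝ, 0 ≤ a ∧
        Ta P X Y a > min
          ((a + d) ^ d * ((Δ) ^ 4 * (1 + projDensitySup hd (P.map Y))⁻¹ ^ 4 + d) +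
            Real.exp (-a ^ 2 / 2) +
            covL1 P X * Real.exp (-1 / (Real.sqrt 2 * covL1 P X)))
          (((Δ) ^ 4 * (1 + projDensitySup hd (P.map Y))⁻¹ ^ 4 + Real.exp (-a ^ 2 / 2)) * d)) →
      ∃ β ∈ ballB d hd,
        (⨆ z : ℝ, |(P {ω | ⟪β, X ω⟫ ≤ z}).toReal - (P {ω | ⟪β, Y ω⟫ ≤ z}).toReal|) >
          (C * Δ) ^ 4 * (1 + projDensitySup hd (P.map Y))⁻¹ ^ 4 := by
  refine ⟨1 / 2, by norm_num, ?_⟩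
  intro Ω _ P _ d hd X Y hX hY _ _ _ hYtail Δ ⟨a, ha, hTa⟩
  by_contra! hKolm
  set q := Δ ^ 4 * (1 + projDensitySup hd (P.map Y))⁻¹ ^ 4
  set E := Real.exp (-a ^ 2 / 2)
  have hq : 0 ≤ q := by positivity
  have hd₁ : (1 : ℝ) ≤ d := by exact_mod_cast hd
  have hTa_le_one : Ta P X Y a ≤ 1 := abs_probReal_sub_le_one _ _
  have hTa_gt : (q + E) * d < Ta P X Y a := by
    refine (min_lt_iff.1 hTa).resolve_left fun h => h.not_ge (hTa_le_one.trans ?_)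
    have : (1 : ℝ) ≤ (a + d) ^ d := one_le_pow₀ (by linarith)
    nlinarith [Real.exp_pos (-a ^ 2 / 2), covL1_nonneg P X,
      Real.exp_pos (-1 / (Real.sqrt 2 * covL1 P X))]
  have hclose : ∀ β ∈ ballB d hd, ∀ z, |P.real {ω | ⟪β, X ω⟫ ≤ z} - P.real {ω | ⟪β, Y ω⟫ ≤ z}|
      ≤ q / 16 := fun β hβ z => by
    refine (le_ciSup ⟨1, ?_⟩ z).trans ((hKolm β hβ).trans_eq (by ring))
    rintro _ ⟨z, rfl⟩
    exact abs_probReal_sub_le_one _ _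
  have hbound := fun τ => Ta_le_of_projections_close hd hX hY hclose ha (τ := τ)
  rcases lt_or_ge a 1 with ha₁ | ha₁
  · rcases Nat.lt_or_ge d 2 with hd₂ | hd₂
    · obtain rfl : d = 1 := by omega
      have := hbound 1 fun β _ => measureReal_le_one
      norm_num at hTa_gt this
      nlinarith [Real.exp_pos (-a ^ 2 / 2)]
    · have hE : 1 / 2 ≤ E := by nlinarith [Real.add_one_le_exp (-a ^ 2 / 2)]
      have hd₂' : (2 : ℝ) ≤ d := by exact_mod_cast hd₂
      nlinarith [mul_le_mul hE hd₂' (by norm_num) (Real.exp_pos _).le]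
  · have := hbound (E / 2) fun β hβ => by
      have h := hYtail β hβ a (by linarith)
      rw [mcdf_proj_map hY, ← probReal_lt_eq_one_sub (measurable_const.inner hY)] at h
      refine h.trans ?_
      rw [div_div, one_div_mul_eq_div]
      exact div_le_div_of_nonneg_left (Real.exp_pos _).le (by norm_num) (by linarith)
    nlinarith [Real.exp_pos (-a ^ 2 / 2)]

end
end
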